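/- Suppose N₂/N₁ > r₂. Then every germ solution of the call-center system satisfies ρ₁ = N₁/τ̄, ρ₅ = π_ext·N₁/τ̄ and ρ₆ = π_ur·N₁/τ̄. -/

import Mathlib

/-- Lexicographic order on `ℝ × ℝ`. -/
def lexLe (p q : ℝ × ℝ) : Prop := p.1 < q.1 ∨ (p.1 = q.1 ∧ p.2 ≤ q.2)

/-- Strict lexicographic order on `ℝ × ℝ`. -/
def lexLt (p q : ℝ × ℝ) : Prop := lexLe p q ∧ p ≠ q

/-- Lexicographic minimum on `ℝ × ℝ`. -/
noncomputable def lexMin (p q : ℝ × ℝ) : ℝ × ℝ :=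
  if p.1 < q.1 ∨ (p.1 = q.1 ∧ p.2 ≤ q.2) then p else q

/-- Parameters of the emergency call center: routing proportions `pe, pu, pa`
(for extremely urgent, urgent, and advice calls), holding times
`te, tu, ta, ttr, te', tu'`, and staffing levels `N1, N2`. -/
structure CCParams where
  pe : ℝ
  pu : ℝ
  pa : ℝ
  te : ℝ
  tu : ℝ
  ta : ℝ
  ttr : ℝ
  te' : ℝ
  tu' : ℝ
  N1 : ℝ
  N2 : ℝ
  hpe : 0 < pe
  hpu : 0 < pu
  hpa : 0 < pa
  hsum : pe + pu + pa = 1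
  hte : 0 < te
  htu : 0 < tu
  hta : 0 < ta
  httr : 0 < ttr
  hte' : 0 < te'
  htu' : 0 < tu'
  hN1 : 0 < N1
  hN2 : 0 < N2

/-- Average treatment time at level 1. -/
noncomputable def CCParams.tbar (P : CCParams) : ℝ :=
  P.pe * (P.te + P.ttr) + P.pu * P.tu + P.pa * P.ta

/-- First phase transition point. -/
noncomputable def CCParams.r1 (P : CCParams) : ℝ := P.pe * (P.ttr + P.te') / P.tbar

/-- Second phase transition point. -/
noncomputable def CCParams.r2 (P : CCParams) : ℝ :=
  (P.pe * (P.ttr + P.te') + P.pu * P.tu') / P.tbar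

/-- A germ solution of the call-center system. -/
noncomputable def CCParams.GermSol (P : CCParams) (ρ1 u1 ρ5 u5 ρ6 u6 : ℝ) : Prop :=
  0 ≤ ρ1 ∧ 0 ≤ ρ5 ∧ 0 ≤ ρ6 ∧
  -- (a)
  (ρ1, u1) = (ρ5 + P.pu * ρ1 + P.pa * ρ1,
    P.N1 + (u5 - ρ5 * P.ttr) + P.pu * (u1 - ρ1 * P.tu) + P.pa * (u1 - ρ1 * P.ta)) ∧
  -- (b), case ρ6 = 0
  (ρ6 = 0 → (ρ5, u5) = lexMin (ρ5, P.N2 + u5 - ρ5 * (P.ttr + P.te'))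
      (P.pe * ρ1, P.pe * (u1 - ρ1 * P.te))) ∧
  -- (b), case ρ6 > 0
  (0 < ρ6 → (ρ5, u5) = (P.pe * ρ1, P.pe * (u1 - ρ1 * P.te))) ∧
  -- (c)
  (ρ6, u6) = lexMin (ρ6, P.N2 - ρ5 * (P.ttr + P.te') + u6 - ρ6 * P.tu')
      (P.pu * ρ1, P.pu * (u1 - ρ1 * P.tu))

/-- The δ-discretized call-center equations at time `t`. -/
noncomputable def CCParams.Eqns (P : CCParams) (z1 z5 z6 : ℝ → ℝ) (δ t : ℝ) : Prop :=
  z1 t = P.N1 + z5 (t - P.ttr) + P.pu * z1 (t - P.tu) + P.pa * z1 (t - P.ta) ∧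
  z5 t = min (P.N2 + z5 (t - P.ttr - P.te') + z6 (t - P.tu') - z6 (t - δ))
      (P.pe * z1 (t - P.te)) ∧
  z6 t = min (P.N2 + z5 (t - P.ttr - P.te') + z6 (t - P.tu') - z5 t)
      (P.pu * z1 (t - P.tu))

/-!
Conservation at level 1 forces `ρ₅ = π_ext·ρ₁`, and turns the slack `π_ext·(u₁ − ρ₁τ_ext) − u₅` of
the extremely-urgent queue into `N₁ − ρ₁τ̄`. Since `(ρ₅, u₅)` is lexicographically below
`(π_ext·ρ₁, π_ext·(u₁ − ρ₁τ_ext))`, this gives `ρ₁τ̄ ≤ N₁`. If either minimum in (b) or (c) were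
attained by its first argument, level 2 would be saturated: `N₂ = ρ₅(τ_tr + τ_ext') + ρ₆τ_ur'`,
which together with `ρ₁τ̄ ≤ N₁` and `ρ₆ ≤ π_ur·ρ₁` yields `N₂ ≤ r₂·N₁`, contradicting the phase
assumption. Hence both minima are attained by the arrival flows.
-/

theorem lexLe.fst_le {p q : ℝ × ℝ} (h : lexLe p q) : p.1 ≤ q.1 := by
  rcases h with h | h
  exacts [h.le, h.1.le]

theorem lexLe.snd_le_of_fst_eq {p q : ℝ × ℝ} (h : lexLe p q) (hfst : p.1 = q.1) : p.2 ≤ q.2 := by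
  rcases h with h | h
  exacts [absurd hfst h.ne, h.2]

theorem lexLe_refl (p : ℝ × ℝ) : lexLe p p := Or.inr ⟨rfl, le_rfl⟩

theorem lexLe_lexMin_right (p q : ℝ × ℝ) : lexLe (lexMin p q) q := by
  unfold lexMin
  split_ifs with h
  exacts [h, lexLe_refl q]

theorem lexMin_eq_or (p q : ℝ × ℝ) : lexMin p q = p ∨ lexMin p q = q := by
  unfold lexMin
  split_ifs
  exacts [Or.inl rfl, Or.inr rfl]

namespace CCParams

variable {P : CCParams} {ρ1 u1 ρ5 u5 ρ6 u6 : ℝ}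

theorem tbar_pos (P : CCParams) : 0 < P.tbar := by
  have := mul_pos P.hpe (add_pos P.hte P.httr)
  have := mul_pos P.hpu P.htu
  have := mul_pos P.hpa P.hta
  unfold tbar
  linarith

theorem lt_N2_mul_tbar_of_r2_lt (hphase : P.r2 < P.N2 / P.N1) :
    (P.pe * (P.ttr + P.te') + P.pu * P.tu') * P.N1 < P.N2 * P.tbar := by
  rwa [lt_div_iff₀ P.hN1, r2, div_mul_eq_mul_div, div_lt_iff₀ P.tbar_pos] at hphase

namespace GermSol

theorem rho5_eq (hsol : P.GermSol ρ1 u1 ρ5 u5 ρ6 u6) : ρ5 = P.pe * ρ1 := by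
  obtain ⟨-, -, -, ha, -⟩ := hsol
  linear_combination -ρ1 * P.hsum - (Prod.mk.inj ha).1

theorem slack_eq (hsol : P.GermSol ρ1 u1 ρ5 u5 ρ6 u6) :
    P.pe * (u1 - ρ1 * P.te) - u5 = P.N1 - ρ1 * P.tbar := by
  have h5 := hsol.rho5_eq
  obtain ⟨-, -, -, ha, -⟩ := hsol
  unfold tbar
  linear_combination (Prod.mk.inj ha).2 + u1 * P.hsum - P.ttr * h5

theorem rho1_mul_tbar_le (hsol : P.GermSol ρ1 u1 ρ5 u5 ρ6 u6) : ρ1 * P.tbar ≤ P.N1 := by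
  have h5 := hsol.rho5_eq
  have hle : u5 ≤ P.pe * (u1 - ρ1 * P.te) := by
    obtain ⟨-, -, hρ6, -, hb_zero, hb_pos, -⟩ := hsol
    rcases hρ6.eq_or_lt with h6 | h6
    · exact (hb_zero h6.symm ▸ lexLe_lexMin_right _ _).snd_le_of_fst_eq h5
    · exact (Prod.mk.inj (hb_pos h6)).2.le
  linarith [hsol.slack_eq]

theorem not_saturated (hsol : P.GermSol ρ1 u1 ρ5 u5 ρ6 u6) (hphase : P.r2 < P.N2 / P.N1)
    (h6 : ρ6 ≤ P.pu * ρ1) : P.N2 ≠ ρ5 * (P.ttr + P.te') + ρ6 * P.tu' := by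
  intro hN2
  have hρ1 := hsol.rho1_mul_tbar_le
  have hρ6 : ρ6 * P.tbar ≤ P.pu * P.N1 := calc
    ρ6 * P.tbar ≤ P.pu * ρ1 * P.tbar := mul_le_mul_of_nonneg_right h6 P.tbar_pos.le
    _ = P.pu * (ρ1 * P.tbar) := mul_assoc _ _ _
    _ ≤ P.pu * P.N1 := mul_le_mul_of_nonneg_left hρ1 P.hpu.le
  have hlt : P.N2 * P.tbar < P.N2 * P.tbar := calc
    P.N2 * P.tbar = P.pe * (P.ttr + P.te') * (ρ1 * P.tbar) + P.tu' * (ρ6 * P.tbar) := by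
      rw [hN2, hsol.rho5_eq]; ring
    _ ≤ P.pe * (P.ttr + P.te') * P.N1 + P.tu' * (P.pu * P.N1) := by
      have := mul_pos P.hpe (add_pos P.httr P.hte')
      have := P.htu'
      gcongr
    _ = (P.pe * (P.ttr + P.te') + P.pu * P.tu') * P.N1 := by ring
    _ < P.N2 * P.tbar := lt_N2_mul_tbar_of_r2_lt hphase
  exact lt_irrefl _ hlt

theorem rho1_mul_tbar_eq (hsol : P.GermSol ρ1 u1 ρ5 u5 ρ6 u6) (hphase : P.r2 < P.N2 / P.N1) :
    ρ1 * P.tbar = P.N1 := by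
  suffices u5 = P.pe * (u1 - ρ1 * P.te) by linarith [hsol.slack_eq]
  have hsat := hsol.not_saturated hphase
  obtain ⟨hρ1, -, hρ6, -, hb_zero, hb_pos, -⟩ := hsol
  rcases hρ6.eq_or_lt with h6 | h6
  · have hb := hb_zero h6.symm
    rcases lexMin_eq_or _ _ with hmin | hmin <;> rw [hmin, Prod.mk.injEq] at hb
    · refine absurd ?_ (hsat (h6 ▸ mul_nonneg P.hpu.le hρ1))
      rw [← h6, zero_mul, add_zero]
      linarith [hb.2]
    · exact hb.2
  · exact (Prod.mk.inj (hb_pos h6)).2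

theorem rho6_eq (hsol : P.GermSol ρ1 u1 ρ5 u5 ρ6 u6) (hphase : P.r2 < P.N2 / P.N1) :
    ρ6 = P.pu * ρ1 := by
  have hsat := hsol.not_saturated hphase
  obtain ⟨-, -, -, -, -, -, hc⟩ := hsol
  have h6 : ρ6 ≤ P.pu * ρ1 := (hc ▸ lexLe_lexMin_right _ _).fst_le
  rcases lexMin_eq_or _ _ with hmin | hmin <;> rw [hmin, Prod.mk.injEq] at hc
  · refine absurd ?_ (hsat h6)
    linarith [hc.2]
  · exact hc.1

end GermSol

end CCParams

/-- if `N₂/N₁ > r₂`, every germ solution satisfies `ρ₁ = N₁/τ̄`,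
`ρ₅ = π_ext·N₁/τ̄` and `ρ₆ = π_ur·N₁/τ̄`. -/
theorem throughput_phase_high (P : CCParams) (hphase : P.N2 / P.N1 > P.r2)
    (ρ1 u1 ρ5 u5 ρ6 u6 : ℝ) (hsol : P.GermSol ρ1 u1 ρ5 u5 ρ6 u6) :
    ρ1 = P.N1 / P.tbar ∧
    ρ5 = P.pe * P.N1 / P.tbar ∧
    ρ6 = P.pu * P.N1 / P.tbar := by
  have hρ1 : ρ1 = P.N1 / P.tbar := by
    rw [eq_div_iff P.tbar_pos.ne', hsol.rho1_mul_tbar_eq hphase]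
  refine ⟨hρ1, ?_, ?_⟩
  · rw [hsol.rho5_eq, hρ1, mul_div_assoc]
  · rw [hsol.rho6_eq hphase, hρ1, mul_div_assoc]
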